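/- arXiv:0912.3168 — 2 statements merged into one kernel-verified Lean document; each statement's English description precedes it below -/
import Mathlib

section
/- Let $0<H<1$ and let $\phi(t) = \int_0^{\infty}\bigl((t+x)^{H-1/2} - x^{H-1/2}\bigr)^2\,dx$ for $t>0$. Then $\phi$ is twice differentiable on $(0,\infty)$ with $\phi''(t) = (2H-1)\, t^{2H-2}\,\bigl(-1 + (3/2-H)\, B(2-2H, H+1/2)\bigr)$, where $B$ is the Beta function. -/
/-!
Write `a = H - 1/2`, so that `|a| < 1/2`. The integrand of `φ` and its first two derivatives in
`t` are bounded, locally uniformly in `t`, by `C₁ + C₂ x^b` with `b > -1` near `x = 0` and by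
`C₃ x^e` with `e < -1` near `∞` (the latter via the mean value bound
`|(s+x)^a - x^a| ≤ |a| s x^(a-1)`), so we may differentiate under the integral sign twice. The
second derivative splits into the separately integrable terms `2a(2a-1) (t+x)^(2a-2)` and
`2a(a-1) (t+x)^(a-2) x^a`, and the substitution `x = t(1-u)/u` turns `∫_0^∞ (t+x)^p x^q dx` into
`t^(p+q+1) B(-p-q-1, q+1)`.
-/

open MeasureTheory Set Filter Topology

section RpowBounds

variable {a p p₁ p₂ q A B c s x y : ℝ}

theorem rpow_le_rpow_add_rpow_of_mem_Icc {d : ℝ} (hc : 0 < c) (hy : y ∈ Icc c d) :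
    y ^ p ≤ c ^ p + d ^ p := by
  rcases le_total 0 p with hp | hp
  · linarith [Real.rpow_le_rpow (hc.le.trans hy.1) hy.2 hp, Real.rpow_nonneg hc.le p]
  · linarith [Real.rpow_le_rpow_of_nonpos hc hy.1 hp,
      Real.rpow_nonneg (hc.le.trans (hy.1.trans hy.2)) p]

theorem abs_add_rpow_sub_rpow_le (ha : a ≤ 1) (hx : 0 < x) (hs : 0 ≤ s) :
    |(s + x) ^ a - x ^ a| ≤ |a| * x ^ (a - 1) * s := by
  have key := (convex_Icc x (x + s)).norm_image_sub_le_of_norm_hasDerivWithin_le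
    (f := fun y : ℝ => y ^ a) (C := |a| * x ^ (a - 1)) (x := x) (y := x + s)
    (fun y hy => (Real.hasDerivAt_rpow_const (Or.inl (hx.trans_le hy.1).ne')).hasDerivWithinAt)
    (fun y hy => by
      rw [Real.norm_eq_abs, abs_mul, abs_of_nonneg (Real.rpow_nonneg (hx.le.trans hy.1) _)]
      exact mul_le_mul_of_nonneg_left (Real.rpow_le_rpow_of_nonpos hx hy.1 (by linarith))
        (abs_nonneg a))
    (left_mem_Icc.2 (by linarith)) (right_mem_Icc.2 (by linarith))
  rwa [Real.norm_eq_abs, Real.norm_eq_abs, add_sub_cancel_left, abs_of_nonneg hs,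
    add_comm x s] at key

theorem abs_rpow_mul_rpow_le (hc : 0 < c) (hcy : c ≤ y) (hx : 0 ≤ x) (hp : p ≤ 0) :
    |y ^ p * x ^ q| ≤ c ^ p * x ^ q := by
  rw [abs_of_nonneg (mul_nonneg (Real.rpow_nonneg (hc.le.trans hcy) _) (Real.rpow_nonneg hx _))]
  exact mul_le_mul_of_nonneg_right (Real.rpow_le_rpow_of_nonpos hc hcy hp) (Real.rpow_nonneg hx _)

theorem abs_mul_rpow_sub_mul_rpow_mul_le (hc : 0 < c) (hcy : c ≤ y) (hx : 0 ≤ x)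
    (hp₁ : p₁ ≤ 0) (hp₂ : p₂ ≤ 0) :
    |A * y ^ p₁ - B * (y ^ p₂ * x ^ q)| ≤ |A| * c ^ p₁ + |B| * c ^ p₂ * x ^ q := by
  have hy : 0 < y := hc.trans_le hcy
  have hxq := Real.rpow_nonneg hx q
  calc |A * y ^ p₁ - B * (y ^ p₂ * x ^ q)|
      ≤ |A| * y ^ p₁ + |B| * (y ^ p₂ * x ^ q) := by
        refine (abs_sub _ _).trans_eq ?_
        rw [abs_mul, abs_mul, abs_of_nonneg (Real.rpow_nonneg hy.le _),
          abs_of_nonneg (mul_nonneg (Real.rpow_nonneg hy.le _) hxq)]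
    _ ≤ |A| * c ^ p₁ + |B| * (c ^ p₂ * x ^ q) := by
        have h₁ := Real.rpow_le_rpow_of_nonpos hc hcy hp₁
        have h₂ := Real.rpow_le_rpow_of_nonpos hc hcy hp₂
        gcongr
    _ = |A| * c ^ p₁ + |B| * c ^ p₂ * x ^ q := by ring

end RpowBounds

section IntegrableOnIoi

variable {f : ℝ → ℝ} {b e C₁ C₂ C₃ : ℝ}

theorem integrableOn_Ioi_zero_ite_rpow (C₁ C₂ C₃ : ℝ) (hb : -1 < b) (he : e < -1) :
    IntegrableOn (fun x : ℝ => if x ≤ 1 then C₁ + C₂ * x ^ b else C₃ * x ^ e) (Ioi 0) := by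
  rw [← Ioc_union_Ioi_eq_Ioi zero_le_one]
  refine IntegrableOn.union ?_ ?_
  · have : IntegrableOn (fun x : ℝ => C₁ + C₂ * x ^ b) (Ioc 0 1) :=
      (integrableOn_const measure_Ioc_lt_top.ne).add
        ((intervalIntegral.intervalIntegrable_rpow' hb).1.const_mul C₂)
    exact this.congr_fun (fun x hx => by simp [hx.2]) measurableSet_Ioc
  · exact IntegrableOn.congr_fun ((integrableOn_Ioi_rpow_of_lt he one_pos).const_mul C₃)
      (fun x hx => by simp [not_le.2 (mem_Ioi.1 hx)]) measurableSet_Ioi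

theorem integrableOn_Ioi_zero_of_rpow_bounds (hb : -1 < b) (he : e < -1)
    (hf : AEStronglyMeasurable f (volume.restrict (Ioi 0)))
    (h_near : ∀ x ∈ Ioc (0 : ℝ) 1, |f x| ≤ C₁ + C₂ * x ^ b)
    (h_far : ∀ x ∈ Ioi (1 : ℝ), |f x| ≤ C₃ * x ^ e) :
    IntegrableOn f (Ioi 0) := by
  refine (integrableOn_Ioi_zero_ite_rpow C₁ C₂ C₃ hb he).mono' hf ?_
  filter_upwards [ae_restrict_mem measurableSet_Ioi] with x (hx : 0 < x)
  rw [Real.norm_eq_abs]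
  split_ifs with h
  · exact h_near x ⟨hx, h⟩
  · exact h_far x (not_le.1 h)

theorem hasDerivAt_integral_Ioi_zero_of_rpow_bounds {F F' : ℝ → ℝ → ℝ} {t : ℝ} {U : Set ℝ}
    (hU : U ∈ 𝓝 t) (hb : -1 < b) (he : e < -1)
    (hF_meas : ∀ᶠ s in 𝓝 t, AEStronglyMeasurable (F s) (volume.restrict (Ioi 0)))
    (hF_int : IntegrableOn (F t) (Ioi 0))
    (hF'_meas : AEStronglyMeasurable (F' t) (volume.restrict (Ioi 0)))
    (h_near : ∀ s ∈ U, ∀ x ∈ Ioc (0 : ℝ) 1, |F' s x| ≤ C₁ + C₂ * x ^ b)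
    (h_far : ∀ s ∈ U, ∀ x ∈ Ioi (1 : ℝ), |F' s x| ≤ C₃ * x ^ e)
    (h_deriv : ∀ s ∈ U, ∀ x ∈ Ioi (0 : ℝ), HasDerivAt (F · x) (F' s x) s) :
    HasDerivAt (fun s => ∫ x in Ioi 0, F s x) (∫ x in Ioi 0, F' t x) t := by
  refine (hasDerivAt_integral_of_dominated_loc_of_deriv_le (μ := volume.restrict (Ioi 0))
    (bound := fun x : ℝ => if x ≤ 1 then C₁ + C₂ * x ^ b else C₃ * x ^ e) hU hF_meas hF_int
    hF'_meas ?_ (integrableOn_Ioi_zero_ite_rpow C₁ C₂ C₃ hb he) ?_).2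
  · filter_upwards [ae_restrict_mem measurableSet_Ioi] with x (hx : 0 < x) s hs
    rw [Real.norm_eq_abs]
    split_ifs with h
    · exact h_near s hs x ⟨hx, h⟩
    · exact h_far s hs x (not_le.1 h)
  · filter_upwards [ae_restrict_mem measurableSet_Ioi] with x hx s hs
    exact h_deriv s hs x hx

theorem integrableOn_Ioi_zero_add_rpow_mul_rpow {c p q : ℝ} (hc : 0 < c) (hp : p ≤ 0)
    (hq : -1 < q) (hpq : p + q < -1) :
    IntegrableOn (fun x => (c + x) ^ p * x ^ q) (Ioi 0) := by
  refine integrableOn_Ioi_zero_of_rpow_bounds (C₁ := 0) (C₂ := c ^ p) (C₃ := 1) hq hpq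
    (by fun_prop) (fun x hx => ?_) (fun x (hx : 1 < x) => ?_)
  · rw [zero_add]
    exact abs_rpow_mul_rpow_le hc (le_add_of_nonneg_right hx.1.le) hx.1.le hp
  · rw [one_mul, Real.rpow_add (by linarith)]
    exact abs_rpow_mul_rpow_le (by linarith) (le_add_of_nonneg_left hc.le) (by linarith) hp

end IntegrableOnIoi

theorem integral_Ioi_zero_add_rpow_mul_rpow {c : ℝ} (p q : ℝ) (hc : 0 < c) :
    ∫ x in Ioi 0, (c + x) ^ p * x ^ q
      = c ^ (p + q + 1) * ∫ u in (0 : ℝ)..1, u ^ (-p - q - 2) * (1 - u) ^ q := by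
  have himg : (fun u : ℝ => c / u - c) '' Ioo 0 1 = Ioi 0 := by
    ext y
    simp only [mem_image, mem_Ioo, mem_Ioi]
    constructor
    · rintro ⟨u, ⟨hu0, hu1⟩, rfl⟩
      have : c < c / u := by rw [lt_div_iff₀ hu0]; nlinarith
      linarith
    · intro hy
      refine ⟨c / (c + y), ⟨by positivity, (div_lt_one (by linarith)).2 (by linarith)⟩, ?_⟩
      field_simp
      ring
  have hderiv : ∀ u ∈ Ioo (0 : ℝ) 1,
      HasDerivWithinAt (fun u : ℝ => c / u - c) (-(c / u ^ 2)) (Ioo 0 1) u := by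
    intro u hu
    simpa [div_eq_mul_inv] using
      (((hasDerivAt_inv hu.1.ne').const_mul c).sub_const c).hasDerivWithinAt
  have hinj : InjOn (fun u : ℝ => c / u - c) (Ioo 0 1) := by
    intro u hu v hv h
    rw [sub_left_inj, div_eq_div_iff hu.1.ne' hv.1.ne'] at h
    exact ((mul_right_inj' hc.ne').1 h).symm
  rw [← himg, integral_image_eq_integral_abs_deriv_smul measurableSet_Ioo hderiv
    hinj, intervalIntegral.integral_of_le zero_le_one, integral_Ioc_eq_integral_Ioo,
    ← integral_const_mul]
  refine setIntegral_congr_fun measurableSet_Ioo fun u ⟨hu0, hu1⟩ => ?_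
  have h1u : 0 < 1 - u := by linarith
  rw [smul_eq_mul, show c + (c / u - c) = c / u by ring, show c / u - c = c * (1 - u) / u by
    field_simp, abs_neg, abs_of_pos (by positivity : 0 < c / u ^ 2)]
  refine Real.log_injOn_pos (mem_Ioi.2 (by positivity)) (mem_Ioi.2 (by positivity)) ?_
  simp (disch := positivity) only [Real.log_mul, Real.log_div, Real.log_rpow, Real.log_pow]
  push_cast
  ring

theorem integral_Ioi_zero_add_rpow {c p : ℝ} (hp : p < -1) (hc : 0 < c) :
    ∫ x in Ioi 0, (c + x) ^ p = -c ^ (p + 1) / (p + 1) := by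
  have h := integral_Ioi_zero_add_rpow_mul_rpow p 0 hc
  simp only [Real.rpow_zero, mul_one, add_zero, sub_zero] at h
  rw [h, integral_rpow (Or.inl (by linarith)), Real.one_rpow,
    Real.zero_rpow (by linarith), show -p - 2 + 1 = -(p + 1) by ring]
  field_simp [show p + 1 ≠ 0 by linarith]
  ring

section RpowDiffSq

noncomputable def rpowDiffSq (a s x : ℝ) : ℝ := ((s + x) ^ a - x ^ a) ^ 2

noncomputable def rpowDiffSqDeriv (a s x : ℝ) : ℝ :=
  2 * a * (s + x) ^ (2 * a - 1) - 2 * a * ((s + x) ^ (a - 1) * x ^ a)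

noncomputable def rpowDiffSqDeriv2 (a s x : ℝ) : ℝ :=
  2 * a * (2 * a - 1) * (s + x) ^ (2 * a - 2) - 2 * a * (a - 1) * ((s + x) ^ (a - 2) * x ^ a)

variable {a c s t x : ℝ}

theorem hasDerivAt_add_const_rpow (p : ℝ) (hsx : 0 < s + x) :
    HasDerivAt (fun s => (s + x) ^ p) (p * (s + x) ^ (p - 1)) s := by
  simpa using ((hasDerivAt_id s).add_const x).rpow_const (p := p) (Or.inl hsx.ne')

theorem hasDerivAt_rpowDiffSq (a : ℝ) (hsx : 0 < s + x) :
    HasDerivAt (rpowDiffSq a · x) (rpowDiffSqDeriv a s x) s := by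
  refine (((hasDerivAt_add_const_rpow a hsx).sub_const (x ^ a)).pow 2).congr_deriv ?_
  rw [rpowDiffSqDeriv, show 2 * a - 1 = (a - 1) + a by ring, Real.rpow_add hsx]
  norm_num
  ring

theorem hasDerivAt_rpowDiffSqDeriv (a : ℝ) (hsx : 0 < s + x) :
    HasDerivAt (rpowDiffSqDeriv a · x) (rpowDiffSqDeriv2 a s x) s := by
  refine ((((hasDerivAt_add_const_rpow (2 * a - 1) hsx).const_mul (2 * a)).sub
    (((hasDerivAt_add_const_rpow (a - 1) hsx).mul_const (x ^ a)).const_mul (2 * a)))).congr_deriv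
    ?_
  rw [rpowDiffSqDeriv2, show 2 * a - 1 - 1 = 2 * a - 2 by ring, show a - 1 - 1 = a - 2 by ring]
  ring

theorem abs_rpowDiffSq_le_of_le_one (ht : 0 < t) (hx : x ∈ Ioc (0 : ℝ) 1) :
    |rpowDiffSq a t x| ≤ 2 * (t ^ (2 * a) + (t + 1) ^ (2 * a)) + 2 * x ^ (2 * a) := by
  have hsq (y : ℝ) (hy : 0 ≤ y) : (y ^ a) ^ 2 = y ^ (2 * a) := by
    rw [← Real.rpow_natCast, ← Real.rpow_mul hy]
    norm_num [mul_comm]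
  have := rpow_le_rpow_add_rpow_of_mem_Icc (p := 2 * a) ht
    ⟨(by linarith [hx.1] : t ≤ t + x), (by linarith [hx.2] : t + x ≤ t + 1)⟩
  rw [rpowDiffSq, abs_of_nonneg (sq_nonneg _)]
  nlinarith [sq_nonneg ((t + x) ^ a + x ^ a), hsq (t + x) (by linarith [hx.1]), hsq x hx.1.le]

theorem abs_rpowDiffSq_le (ha : a ≤ 1) (hs : 0 ≤ s) (hx : 0 < x) :
    |rpowDiffSq a s x| ≤ a ^ 2 * s ^ 2 * x ^ (2 * a - 2) := by
  rw [rpowDiffSq, abs_of_nonneg (sq_nonneg _), ← sq_abs]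
  calc |(s + x) ^ a - x ^ a| ^ 2 ≤ (|a| * x ^ (a - 1) * s) ^ 2 := by
        gcongr
        exact abs_add_rpow_sub_rpow_le ha hx hs
    _ = a ^ 2 * s ^ 2 * x ^ (2 * a - 2) := by
        rw [show 2 * a - 2 = (a - 1) + (a - 1) by ring, Real.rpow_add hx, ← sq_abs a]
        ring

theorem abs_rpowDiffSqDeriv_le_of_le (ha : a ≤ 1 / 2) (hc : 0 < c) (hcs : c ≤ s) (hx : 0 < x) :
    |rpowDiffSqDeriv a s x| ≤ |2 * a| * c ^ (2 * a - 1) + |2 * a| * c ^ (a - 1) * x ^ a :=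
  abs_mul_rpow_sub_mul_rpow_mul_le hc (by linarith) hx.le (by linarith) (by linarith)

theorem abs_rpowDiffSqDeriv_le (ha : a ≤ 1) (hs : 0 ≤ s) (hx : 0 < x) :
    |rpowDiffSqDeriv a s x| ≤ 2 * a ^ 2 * s * x ^ (2 * a - 2) := by
  have hsx : 0 < s + x := by linarith
  have hfac : rpowDiffSqDeriv a s x = 2 * a * (s + x) ^ (a - 1) * ((s + x) ^ a - x ^ a) := by
    rw [rpowDiffSqDeriv, show 2 * a - 1 = (a - 1) + a by ring, Real.rpow_add hsx]
    ring
  calc |rpowDiffSqDeriv a s x| = 2 * |a| * (s + x) ^ (a - 1) * |(s + x) ^ a - x ^ a| := by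
        rw [hfac, abs_mul, abs_mul, abs_mul, abs_two, abs_of_nonneg (Real.rpow_nonneg hsx.le _)]
    _ ≤ 2 * |a| * x ^ (a - 1) * (|a| * x ^ (a - 1) * s) := by
        have h₁ : (s + x) ^ (a - 1) ≤ x ^ (a - 1) :=
          Real.rpow_le_rpow_of_nonpos hx (by linarith) (by linarith)
        have h₂ := abs_add_rpow_sub_rpow_le ha hx hs
        gcongr
    _ = 2 * a ^ 2 * s * x ^ (2 * a - 2) := by
        rw [show 2 * a - 2 = (a - 1) + (a - 1) by ring, Real.rpow_add hx, ← sq_abs a]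
        ring

theorem abs_rpowDiffSqDeriv2_le_of_le (ha : a ≤ 1) (hc : 0 < c) (hcs : c ≤ s) (hx : 0 < x) :
    |rpowDiffSqDeriv2 a s x|
      ≤ |2 * a * (2 * a - 1)| * c ^ (2 * a - 2) + |2 * a * (a - 1)| * c ^ (a - 2) * x ^ a :=
  abs_mul_rpow_sub_mul_rpow_mul_le hc (by linarith) hx.le (by linarith) (by linarith)

theorem abs_rpowDiffSqDeriv2_le (ha : a ≤ 1) (hs : 0 ≤ s) (hx : 0 < x) :
    |rpowDiffSqDeriv2 a s x|
      ≤ (|2 * a * (2 * a - 1)| + |2 * a * (a - 1)|) * x ^ (2 * a - 2) := by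
  have h := abs_mul_rpow_sub_mul_rpow_mul_le (A := 2 * a * (2 * a - 1)) (B := 2 * a * (a - 1))
    (p₁ := 2 * a - 2) (p₂ := a - 2) (q := a) hx (le_add_of_nonneg_left hs) hx.le (by linarith)
    (by linarith)
  rwa [mul_assoc _ (x ^ (a - 2)), ← Real.rpow_add hx, show a - 2 + a = 2 * a - 2 by ring,
    ← add_mul] at h

theorem integrableOn_rpowDiffSq (ha₀ : -(1 / 2) < a) (ha₁ : a < 1 / 2) (ht : 0 < t) :
    IntegrableOn (rpowDiffSq a t) (Ioi 0) :=
  integrableOn_Ioi_zero_of_rpow_bounds (by linarith : -1 < 2 * a) (by linarith : 2 * a - 2 < -1)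
    (by unfold rpowDiffSq; fun_prop) (fun _ hx => abs_rpowDiffSq_le_of_le_one ht hx)
    (fun _ hx => abs_rpowDiffSq_le (by linarith) ht.le (zero_lt_one.trans hx))

theorem integrableOn_rpowDiffSqDeriv (ha₀ : -(1 / 2) < a) (ha₁ : a < 1 / 2) (ht : 0 < t) :
    IntegrableOn (rpowDiffSqDeriv a t) (Ioi 0) :=
  integrableOn_Ioi_zero_of_rpow_bounds (by linarith : -1 < a) (by linarith : 2 * a - 2 < -1)
    (by unfold rpowDiffSqDeriv; fun_prop)
    (fun _ hx => abs_rpowDiffSqDeriv_le_of_le ha₁.le ht le_rfl hx.1)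
    (fun _ hx => abs_rpowDiffSqDeriv_le (by linarith) ht.le (zero_lt_one.trans hx))

theorem hasDerivAt_integral_rpowDiffSq (ha₀ : -(1 / 2) < a) (ha₁ : a < 1 / 2) (ht : 0 < t) :
    HasDerivAt (fun s => ∫ x in Ioi 0, rpowDiffSq a s x)
      (∫ x in Ioi 0, rpowDiffSqDeriv a t x) t :=
  hasDerivAt_integral_Ioi_zero_of_rpow_bounds (U := Ioo (t / 2) (2 * t))
    (C₃ := 2 * a ^ 2 * (2 * t)) (Ioo_mem_nhds (by linarith) (by linarith)) (by linarith : -1 < a)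
    (by linarith : 2 * a - 2 < -1) (.of_forall fun s => by unfold rpowDiffSq; fun_prop)
    (integrableOn_rpowDiffSq ha₀ ha₁ ht) (by unfold rpowDiffSqDeriv; fun_prop)
    (fun _ hs _ hx => abs_rpowDiffSqDeriv_le_of_le ha₁.le (half_pos ht) hs.1.le hx.1)
    (fun s hs x (hx : 1 < x) => (abs_rpowDiffSqDeriv_le (by linarith) (by linarith [hs.1])
      (by linarith)).trans (by gcongr; exact hs.2.le))
    (fun _ hs _ hx => hasDerivAt_rpowDiffSq a (by linarith [hs.1, mem_Ioi.1 hx]))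

theorem hasDerivAt_integral_rpowDiffSqDeriv (ha₀ : -(1 / 2) < a) (ha₁ : a < 1 / 2)
    (ht : 0 < t) :
    HasDerivAt (fun s => ∫ x in Ioi 0, rpowDiffSqDeriv a s x)
      (∫ x in Ioi 0, rpowDiffSqDeriv2 a t x) t :=
  hasDerivAt_integral_Ioi_zero_of_rpow_bounds (U := Ioi (t / 2))
    (Ioi_mem_nhds (by linarith)) (by linarith : -1 < a)
    (by linarith : 2 * a - 2 < -1) (.of_forall fun s => by unfold rpowDiffSqDeriv; fun_prop)
    (integrableOn_rpowDiffSqDeriv ha₀ ha₁ ht) (by unfold rpowDiffSqDeriv2; fun_prop)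
    (fun _ hs _ hx => abs_rpowDiffSqDeriv2_le_of_le (by linarith) (half_pos ht) hs.le hx.1)
    (fun s hs x (hx : 1 < x) => abs_rpowDiffSqDeriv2_le (by linarith)
      (by linarith [mem_Ioi.1 hs]) (by linarith))
    (fun _ hs _ hx => hasDerivAt_rpowDiffSqDeriv a (by linarith [mem_Ioi.1 hs, mem_Ioi.1 hx]))

theorem integral_rpowDiffSqDeriv2 (ha₀ : -(1 / 2) < a) (ha₁ : a < 1 / 2) (ht : 0 < t) :
    ∫ x in Ioi 0, rpowDiffSqDeriv2 a t x
      = 2 * a * t ^ (2 * a - 1)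
        * (-1 + (1 - a) * ∫ u in (0 : ℝ)..1, u ^ (-2 * a) * (1 - u) ^ a) := by
  have h₁ : IntegrableOn (fun x => (t + x) ^ (2 * a - 2)) (Ioi 0) := by
    simpa using integrableOn_Ioi_zero_add_rpow_mul_rpow (q := 0) ht (by linarith) (by norm_num)
      (by linarith)
  have h₂ : IntegrableOn (fun x => (t + x) ^ (a - 2) * x ^ a) (Ioi 0) :=
    integrableOn_Ioi_zero_add_rpow_mul_rpow ht (by linarith) (by linarith) (by linarith)
  simp only [rpowDiffSqDeriv2]
  rw [integral_sub (h₁.const_mul _) (h₂.const_mul _),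
    integral_const_mul, integral_const_mul,
    integral_Ioi_zero_add_rpow (by linarith) ht, integral_Ioi_zero_add_rpow_mul_rpow _ _ ht,
    show 2 * a - 2 + 1 = 2 * a - 1 by ring, show a - 2 + a + 1 = 2 * a - 1 by ring,
    show -(a - 2) - a - 2 = -2 * a by ring]
  field_simp [show 2 * a - 1 ≠ 0 by linarith]
  ring

end RpowDiffSq

/-- For `0 < H < 1`, the function `φ(t) = ∫_0^∞ ((t+x)^{H-1/2} - x^{H-1/2})² dx` is twice
differentiable on `(0,∞)` with
`φ''(t) = (2H-1) t^{2H-2} (-1 + (3/2-H) B(2-2H, H+1/2))`. -/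
theorem stmt4 (H : ℝ) (h0 : 0 < H) (h1 : H < 1)
    (φ : ℝ → ℝ)
    (hφ : ∀ t : ℝ, φ t = ∫ x in Set.Ioi (0:ℝ), ((t + x) ^ (H - 1/2) - x ^ (H - 1/2)) ^ 2) :
    ∀ t : ℝ, 0 < t →
      HasDerivAt φ (deriv φ t) t ∧
      HasDerivAt (deriv φ)
        ((2 * H - 1) * t ^ (2 * H - 2)
          * (-1 + (3/2 - H) * ∫ u in (0:ℝ)..1, u ^ (2 - 2*H - 1) * (1 - u) ^ (H + 1/2 - 1))) t := by
  intro t ht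
  have ha₀ : -(1 / 2) < H - 1 / 2 := by linarith
  have ha₁ : H - 1 / 2 < 1 / 2 := by linarith
  have hφ' : φ = fun s => ∫ x in Ioi 0, rpowDiffSq (H - 1 / 2) s x := funext hφ
  have hφ_deriv (s : ℝ) (hs : 0 < s) :
      HasDerivAt φ (∫ x in Ioi 0, rpowDiffSqDeriv (H - 1 / 2) s x) s :=
    hφ' ▸ hasDerivAt_integral_rpowDiffSq ha₀ ha₁ hs
  have hderiv_eq : deriv φ =ᶠ[𝓝 t] fun s => ∫ x in Ioi 0, rpowDiffSqDeriv (H - 1 / 2) s x :=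
    eventually_of_mem (Ioi_mem_nhds ht) fun s hs => (hφ_deriv s hs).deriv
  refine ⟨(hφ_deriv t ht).differentiableAt.hasDerivAt, ?_⟩
  have h := (hasDerivAt_integral_rpowDiffSqDeriv ha₀ ha₁ ht).congr_of_eventuallyEq hderiv_eq
  rwa [integral_rpowDiffSqDeriv2 ha₀ ha₁ ht, show -2 * (H - 1 / 2) = 2 - 2 * H - 1 by ring,
    show H - 1 / 2 = H + 1 / 2 - 1 by ring, show 2 * (H + 1 / 2 - 1) = 2 * H - 1 by ring,
    show 2 * H - 1 - 1 = 2 * H - 2 by ring, show 1 - (H + 1 / 2 - 1) = 3 / 2 - H by ring] at h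
end

section
/- Let $0<\beta<1$, $\gamma,\delta\in\mathbb{R}$, and for $f:(0,\infty)\to\mathbb{R}$ define the Hölder seminorm $N(f) = \sup_{s<t} |f(t)-f(s)|\,/\,\bigl((t-s)^{\beta}\sup_{s\le u\le t} u^{\gamma,\delta}\bigr)$ where $t^{\gamma,\delta}=t^{\gamma}1_{\{t\le1\}}+t^{\delta}1_{\{t>1\}}$, and the dyadic seminorm $N'(f) = \sup\{ |f(t)-f(s)|\,/\,((2^n)^{\gamma,\delta}(t-s)^{\beta}) : 2^n\le s\le t\le 2^{n+1},\, n\in\mathbb{Z}\}$. If $\gamma\ge 0$ and $\delta\ge 0$, then there exists $C>0$ (depending only on $\beta,\gamma,\delta$) such that $N'(f)\le C\,N(f)$ and $N(f)\le C\,N'(f)$ for all $f$. -/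
/-!
Since `γ, δ ≥ 0` the weight is nondecreasing, so its supremum over `[s, t]` is its value at `t`,
and it grows at most by the factor `2^γ 2^δ` when its argument doubles; this gives the dyadic
bound from the global one. Conversely, for `s < t` in different dyadic blocks, go from `s` up to
the next dyadic point, then through consecutive dyadic points up to the last one below `t`, then
to `t`. The middle increments sum geometrically to at most a multiple of
`((2^m)^β - (2^(n+1))^β) / (2^β - 1)`, and subadditivity `b^β - a^β ≤ (b - a)^β` bounds this by
`(t - s)^β / (2^β - 1)`.
-/

open Set

-- The paper's weight `u^{γ,δ}`.
noncomputable def powWeight (γ δ u : ℝ) : ℝ := if u ≤ 1 then u ^ γ else u ^ δ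

section powWeight

variable {γ δ : ℝ}

lemma powWeight_nonneg {u : ℝ} (hu : 0 ≤ u) : 0 ≤ powWeight γ δ u := by
  unfold powWeight
  split_ifs <;> positivity

lemma powWeight_monotoneOn (hγ : 0 ≤ γ) (hδ : 0 ≤ δ) : MonotoneOn (powWeight γ δ) (Ici 0) := by
  intro u (hu : 0 ≤ u) v _ huv
  unfold powWeight
  split_ifs with hu1 hv1 hv1
  · exact Real.rpow_le_rpow hu huv hγ
  · exact (Real.rpow_le_one hu hu1 hγ).trans (Real.one_le_rpow (le_of_not_ge hv1) hδ)
  · exact absurd (huv.trans hv1) hu1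
  · exact Real.rpow_le_rpow (by linarith [not_le.1 hu1]) huv hδ

lemma powWeight_two_mul_le (hγ : 0 ≤ γ) (hδ : 0 ≤ δ) {u : ℝ} (hu : 0 ≤ u) :
    powWeight γ δ (2 * u) ≤ 2 ^ γ * 2 ^ δ * powWeight γ δ u := by
  have h2γ : (1 : ℝ) ≤ 2 ^ γ := Real.one_le_rpow one_le_two hγ
  have h2δ : (1 : ℝ) ≤ 2 ^ δ := Real.one_le_rpow one_le_two hδ
  unfold powWeight
  split_ifs with h2u hu1 hu1
  · rw [Real.mul_rpow zero_le_two hu, mul_right_comm]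
    exact le_mul_of_one_le_right (by positivity) h2δ
  · linarith
  · calc (2 * u) ^ δ ≤ 2 ^ δ := Real.rpow_le_rpow (by positivity) (by linarith) hδ
      _ ≤ 2 ^ δ * (2 * u) ^ γ :=
        le_mul_of_one_le_right (by positivity) (Real.one_le_rpow (by linarith) hγ)
      _ = 2 ^ γ * 2 ^ δ * u ^ γ := by rw [Real.mul_rpow zero_le_two hu]; ring
  · rw [Real.mul_rpow zero_le_two hu, mul_assoc]
    exact le_mul_of_one_le_left (by positivity) h2γ

lemma sSup_powWeight_image_Icc (hγ : 0 ≤ γ) (hδ : 0 ≤ δ) {s t : ℝ} (hs : 0 ≤ s) (hst : s ≤ t) :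
    sSup (powWeight γ δ '' Icc s t) = powWeight γ δ t :=
  (((powWeight_monotoneOn hγ hδ).mono fun _ hu => hs.trans hu.1).map_isGreatest
    (isGreatest_Icc hst)).csSup_eq

end powWeight

lemma rpow_sub_rpow_le_rpow_sub {β a b : ℝ} (hβ0 : 0 ≤ β) (hβ1 : β ≤ 1) (ha : 0 ≤ a)
    (hab : a ≤ b) : b ^ β - a ^ β ≤ (b - a) ^ β := by
  have := Real.rpow_add_le_add_rpow ha (sub_nonneg.2 hab) hβ0 hβ1
  rw [add_sub_cancel] at this
  linarith

lemma abs_sub_zpow_two_le_of_steps {f : ℝ → ℝ} {β c : ℝ} (hβ : 0 < β) {k m : ℤ} (hkm : k ≤ m)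
    (hstep : ∀ j, k ≤ j → j < m → |f (2 ^ (j + 1)) - f (2 ^ j)| ≤ c * ((2 : ℝ) ^ j) ^ β) :
    |f (2 ^ m) - f (2 ^ k)| ≤ c * (((2 : ℝ) ^ m) ^ β - ((2 : ℝ) ^ k) ^ β) / (2 ^ β - 1) := by
  induction m, hkm using Int.leInduction with
  | base => simp
  | succ m hkm ih =>
    have h2β : 0 < (2 : ℝ) ^ β - 1 := sub_pos.2 (Real.one_lt_rpow one_lt_two hβ)
    have hdouble : ((2 : ℝ) ^ (m + 1)) ^ β = 2 ^ β * ((2 : ℝ) ^ m) ^ β := by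
      rw [zpow_add_one₀ two_ne_zero, mul_comm, Real.mul_rpow zero_le_two (by positivity)]
    calc |f (2 ^ (m + 1)) - f (2 ^ k)|
        ≤ |f (2 ^ (m + 1)) - f (2 ^ m)| + |f (2 ^ m) - f (2 ^ k)| := abs_sub_le _ _ _
      _ ≤ c * ((2 : ℝ) ^ m) ^ β + c * (((2 : ℝ) ^ m) ^ β - ((2 : ℝ) ^ k) ^ β) / (2 ^ β - 1) :=
        add_le_add (hstep m hkm (lt_add_one m))
          (ih fun j hkj hjm => hstep j hkj (hjm.trans (lt_add_one m)))
      _ = c * (((2 : ℝ) ^ (m + 1)) ^ β - ((2 : ℝ) ^ k) ^ β) / (2 ^ β - 1) := by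
        rw [hdouble]
        field_simp
        ring

-- `IsWeightedHolderBound β γ δ M f` and `IsDyadicHolderBound β γ δ M f` say `N(f) ≤ M` and
-- `N'(f) ≤ M`.
def IsWeightedHolderBound (β γ δ M : ℝ) (f : ℝ → ℝ) : Prop :=
  ∀ s t : ℝ, 0 < s → s ≤ t → |f t - f s| ≤ M * (t - s) ^ β * sSup (powWeight γ δ '' Icc s t)

def IsDyadicHolderBound (β γ δ M : ℝ) (f : ℝ → ℝ) : Prop :=
  ∀ (n : ℤ) (s t : ℝ), (2 : ℝ) ^ n ≤ s → s ≤ t → t ≤ (2 : ℝ) ^ (n + 1) →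
    |f t - f s| ≤ M * powWeight γ δ ((2 : ℝ) ^ n) * (t - s) ^ β

section

variable {β γ δ M C : ℝ} {f : ℝ → ℝ}

theorem IsWeightedHolderBound.isDyadicHolderBound (hγ : 0 ≤ γ) (hδ : 0 ≤ δ) (hM : 0 ≤ M)
    (hC : 2 ^ γ * 2 ^ δ ≤ C) (hf : IsWeightedHolderBound β γ δ M f) :
    IsDyadicHolderBound β γ δ (C * M) f := by
  intro n s t hns hst htn
  have hs : 0 < s := (zpow_pos two_pos n).trans_le hns
  have hwt : powWeight γ δ t ≤ C * powWeight γ δ ((2 : ℝ) ^ n) :=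
    calc powWeight γ δ t ≤ powWeight γ δ (2 * 2 ^ n) := by
          rw [← zpow_one_add₀ two_ne_zero, add_comm]
          exact powWeight_monotoneOn hγ hδ (hs.le.trans hst) (mem_Ici.2 (by positivity)) htn
      _ ≤ 2 ^ γ * 2 ^ δ * powWeight γ δ ((2 : ℝ) ^ n) :=
          powWeight_two_mul_le hγ hδ (by positivity)
      _ ≤ C * powWeight γ δ ((2 : ℝ) ^ n) := by
          gcongr
          exact powWeight_nonneg (by positivity)
  calc |f t - f s| ≤ M * (t - s) ^ β * powWeight γ δ t := by
        rw [← sSup_powWeight_image_Icc hγ hδ hs.le hst]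
        exact hf s t hs hst
    _ ≤ M * (t - s) ^ β * (C * powWeight γ δ ((2 : ℝ) ^ n)) := by
        have : 0 ≤ (t - s) ^ β := Real.rpow_nonneg (sub_nonneg.2 hst) β
        gcongr
    _ = C * M * powWeight γ δ ((2 : ℝ) ^ n) * (t - s) ^ β := by ring

namespace IsDyadicHolderBound

lemma abs_sub_le (hγ : 0 ≤ γ) (hδ : 0 ≤ δ) (hM : 0 ≤ M) (hd : IsDyadicHolderBound β γ δ M f)
    {n : ℤ} {a b v : ℝ} (hna : (2 : ℝ) ^ n ≤ a) (hab : a ≤ b) (hbn : b ≤ (2 : ℝ) ^ (n + 1))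
    (hbv : b ≤ v) :
    |f b - f a| ≤ M * powWeight γ δ v * (b - a) ^ β := by
  have h2n : (0 : ℝ) ≤ 2 ^ n := by positivity
  have hw := powWeight_monotoneOn hγ hδ h2n (h2n.trans (by linarith))
    (by linarith : (2 : ℝ) ^ n ≤ v)
  calc |f b - f a| ≤ M * powWeight γ δ ((2 : ℝ) ^ n) * (b - a) ^ β := hd n a b hna hab hbn
    _ ≤ M * powWeight γ δ v * (b - a) ^ β := by
      have := Real.rpow_nonneg (sub_nonneg.2 hab) β
      gcongr

lemma abs_sub_zpow_two_le (hβ : 0 < β) (hγ : 0 ≤ γ) (hδ : 0 ≤ δ) (hM : 0 ≤ M)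
    (hd : IsDyadicHolderBound β γ δ M f) {k m : ℤ} (hkm : k ≤ m) {v : ℝ}
    (hmv : (2 : ℝ) ^ m ≤ v) :
    |f (2 ^ m) - f (2 ^ k)| ≤
      M * powWeight γ δ v * (((2 : ℝ) ^ m) ^ β - ((2 : ℝ) ^ k) ^ β) / (2 ^ β - 1) := by
  refine abs_sub_zpow_two_le_of_steps hβ hkm fun j _ hjm => ?_
  have hgap : (2 : ℝ) ^ (j + 1) - 2 ^ j = 2 ^ j := by
    rw [zpow_add_one₀ two_ne_zero]
    ring
  have := hd.abs_sub_le hγ hδ hM (n := j) le_rfl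
    (zpow_le_zpow_right₀ one_le_two (by omega)) le_rfl
    ((zpow_le_zpow_right₀ one_le_two (by omega)).trans hmv)
  rwa [hgap] at this

theorem isWeightedHolderBound (hβ0 : 0 < β) (hβ1 : β ≤ 1) (hγ : 0 ≤ γ) (hδ : 0 ≤ δ)
    (hM : 0 ≤ M) (hC : 2 + 1 / (2 ^ β - 1) ≤ C) (hd : IsDyadicHolderBound β γ δ M f) :
    IsWeightedHolderBound β γ δ (C * M) f := by
  intro s t hs hst
  rw [sSup_powWeight_image_Icc hγ hδ hs.le hst]
  have hMw : 0 ≤ M * powWeight γ δ t := mul_nonneg hM (powWeight_nonneg (hs.le.trans hst))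
  set B := M * powWeight γ δ t * (t - s) ^ β
  have hB : 0 ≤ B := mul_nonneg hMw (Real.rpow_nonneg (sub_nonneg.2 hst) β)
  have h2β : 0 < (2 : ℝ) ^ β - 1 := sub_pos.2 (Real.one_lt_rpow one_lt_two hβ0)
  have hpiece : ∀ {n : ℤ} {a b : ℝ}, (2 : ℝ) ^ n ≤ a → a ≤ b → b ≤ (2 : ℝ) ^ (n + 1) →
      s ≤ a → b ≤ t → |f b - f a| ≤ B := fun hna hab hbn hsa hbt =>
    (hd.abs_sub_le hγ hδ hM hna hab hbn hbt).trans <|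
      mul_le_mul_of_nonneg_left (Real.rpow_le_rpow (sub_nonneg.2 hab) (by linarith) hβ0.le) hMw
  obtain ⟨n, hns, hsn⟩ := exists_mem_Ico_zpow hs one_lt_two
  obtain ⟨m, hmt, htm⟩ := exists_mem_Ico_zpow (hs.trans_le hst) one_lt_two
  suffices |f t - f s| ≤ 2 * B + B / (2 ^ β - 1) by
    calc |f t - f s| ≤ (2 + 1 / (2 ^ β - 1)) * B := by rwa [add_mul, one_div_mul_eq_div]
      _ ≤ C * B := by gcongr
      _ = C * M * (t - s) ^ β * powWeight γ δ t := by ring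
  rcases le_or_gt ((2 : ℝ) ^ m) s with hms | hsm
  · have := hpiece hms hst htm.le le_rfl le_rfl
    have : 0 ≤ B / (2 ^ β - 1) := by positivity
    linarith
  -- `s < 2 ^ m`: pass from `s` to `t` through the dyadic points `2 ^ (n + 1) ≤ … ≤ 2 ^ m`.
  have hnm : n + 1 ≤ m := (zpow_lt_zpow_iff_right₀ one_lt_two).1 (hns.trans_lt hsm)
  have h2n1m : (2 : ℝ) ^ (n + 1) ≤ 2 ^ m := zpow_le_zpow_right₀ one_le_two hnm
  have hchain : |f (2 ^ m) - f (2 ^ (n + 1))| ≤ B / (2 ^ β - 1) := by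
    refine (hd.abs_sub_zpow_two_le hβ0 hγ hδ hM hnm hmt).trans ?_
    have hsub := rpow_sub_rpow_le_rpow_sub hβ0.le hβ1 (by positivity) h2n1m
    have hlen := Real.rpow_le_rpow (by linarith)
      (by linarith : (2 : ℝ) ^ m - 2 ^ (n + 1) ≤ t - s) hβ0.le
    exact div_le_div_of_nonneg_right (mul_le_mul_of_nonneg_left (hsub.trans hlen) hMw) h2β.le
  have hlast := hpiece le_rfl hmt htm.le hsm.le le_rfl
  have hfirst := hpiece hns hsn.le le_rfl le_rfl (h2n1m.trans hmt)
  have := _root_.abs_sub_le (f t) (f (2 ^ m)) (f s)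
  have := _root_.abs_sub_le (f (2 ^ m)) (f (2 ^ (n + 1))) (f s)
  linarith

end IsDyadicHolderBound

end

/-- Equivalence of the weighted Hölder seminorm and its dyadic version, for `γ, δ ≥ 0`:
there is `C > 0` such that the dyadic seminorm is at most `C` times the full one and
conversely (expressed pointwise on increments, with weight
`w u = u^γ` for `u ≤ 1` and `u^δ` for `u > 1`). -/
theorem stmt8 (β γ δ : ℝ) (hβ0 : 0 < β) (hβ1 : β < 1) (hγ : 0 ≤ γ) (hδ : 0 ≤ δ) :
    ∃ C > (0:ℝ), ∀ (f : ℝ → ℝ) (M : ℝ), 0 ≤ M →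
      (let w : ℝ → ℝ := fun u => if u ≤ 1 then u ^ γ else u ^ δ
      ((∀ s t : ℝ, 0 < s → s ≤ t →
          |f t - f s| ≤ M * (t - s) ^ β * sSup (w '' Set.Icc s t)) →
        ∀ (n : ℤ) (s t : ℝ), (2:ℝ) ^ n ≤ s → s ≤ t → t ≤ (2:ℝ) ^ (n+1) →
          |f t - f s| ≤ C * M * w ((2:ℝ) ^ n) * (t - s) ^ β) ∧
      ((∀ (n : ℤ) (s t : ℝ), (2:ℝ) ^ n ≤ s → s ≤ t → t ≤ (2:ℝ) ^ (n+1) →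
          |f t - f s| ≤ M * w ((2:ℝ) ^ n) * (t - s) ^ β) →
        ∀ s t : ℝ, 0 < s → s ≤ t →
          |f t - f s| ≤ C * M * (t - s) ^ β * sSup (w '' Set.Icc s t))) := by
  refine ⟨max (2 ^ γ * 2 ^ δ) (2 + 1 / (2 ^ β - 1)), lt_max_of_lt_left (by positivity),
    fun f M hM => ⟨fun hf => ?_, fun hd => ?_⟩⟩
  · exact IsWeightedHolderBound.isDyadicHolderBound hγ hδ hM (le_max_left _ _) hf
  · exact IsDyadicHolderBound.isWeightedHolderBound hβ0 hβ1.le hγ hδ hM (le_max_right _ _) hd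
end
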